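/- If W is a finite Coxeter group, then W itself is the smallest Garside shadow in (W,S), and the automaton A_W (with states W, initial state e, transitions w →^s sw whenever ℓ(sw) > ℓ(w), all states final) is the minimal automaton recognizing the language of reduced words: no two distinct states w, w' are equivalent, i.e., for distinct u, v ∈ W there exist s_1,…,s_k ∈ S with s_k⋯s_1 u reduced but s_k⋯s_1 v not reduced (or vice versa). -/

import Mathlib

/-! Let `w₀` be an element of maximal length, which exists since `W` is finite. Tits' signed
permutation representation shows that `ℓ w` is the number of left inversions of `w` and that
the left inversion set of `u * v` is the symmetric difference of that of `u` and the
`u`-conjugate of that of `v`. Since every reflection is a left inversion of `w₀`, this forces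
`ℓ u + ℓ (u⁻¹ * w₀) = ℓ w₀` for every `u`, i.e. every element lies below `w₀` in the weak order.
Hence `w₀` is the join of the simple reflections, so every Garside shadow contains `w₀` and,
being closed under suffixes, all of `W`. For `u ≠ v` we may assume `v ≰ u`; a reduced word for
`w₀ * u⁻¹` then stays reduced in front of `u` but not in front of `v`, because
`ℓ (w₀ * u⁻¹ * v) = ℓ (w₀ * u⁻¹) + ℓ v` says exactly that `v ≤ u`. -/

open CoxeterSystem

variable {A W : Type*} [Group W] {M : CoxeterMatrix A}

/-- Right weak order: `u ≤_R v` iff `ℓ(u) + ℓ(u⁻¹v) = ℓ(v)`. -/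
def wle (cs : CoxeterSystem M W) (u v : W) : Prop :=
  cs.length u + cs.length (u⁻¹ * v) = cs.length v

/-- A subset of `W` is bounded in the right weak order. -/
def Bounded (cs : CoxeterSystem M W) (X : Set W) : Prop :=
  ∃ g, ∀ x ∈ X, wle cs x g

/-- `m` is the join (least upper bound) of `X` in the right weak order. -/
def IsJoin (cs : CoxeterSystem M W) (X : Set W) (m : W) : Prop :=
  (∀ x ∈ X, wle cs x m) ∧ ∀ u, (∀ x ∈ X, wle cs x u) → wle cs m u

/-- `v` is a suffix of `w`: `ℓ(w v⁻¹) + ℓ(v) = ℓ(w)`. -/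
def IsSuffix (cs : CoxeterSystem M W) (v w : W) : Prop :=
  cs.length (w * v⁻¹) + cs.length v = cs.length w

/-- A Garside shadow: contains the simple reflections, is closed under joins of
bounded subsets, and is closed under taking suffixes. -/
def IsGarsideShadow (cs : CoxeterSystem M W) (Bs : Set W) : Prop :=
  (∀ i, cs.simple i ∈ Bs) ∧
  (∀ X ⊆ Bs, Bounded cs X → ∀ m, IsJoin cs X m → m ∈ Bs) ∧
  (∀ w ∈ Bs, ∀ v, IsSuffix cs v w → v ∈ Bs)

/-- `π` is the `B`-projection: `π w = ⋁ {g ∈ B | g ≤_R w}`. -/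
def IsProj (cs : CoxeterSystem M W) (Bs : Set W) (π : W → W) : Prop :=
  ∀ w, π w ∈ Bs ∧ IsJoin cs {g | g ∈ Bs ∧ wle cs g w} (π w)

theorem wle_refl (cs : CoxeterSystem M W) (u : W) : wle cs u u := by
  simp [wle]

theorem wle_antisymm {cs : CoxeterSystem M W} {u v : W} (huv : wle cs u v) (hvu : wle cs v u) :
    u = v := by
  unfold wle at huv hvu
  have : cs.length (u⁻¹ * v) = 0 := by omega
  exact inv_mul_eq_one.1 (cs.length_eq_zero_iff.1 this)

namespace CoxeterSystem

variable (cs : CoxeterSystem M W)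

local prefix:100 "s " => cs.simple
local prefix:100 "π " => cs.wordProd
local prefix:100 "ℓ " => cs.length
local prefix:100 "lis " => cs.leftInvSeq

lemma conj_simple_conj_simple (i : A) (t : W) : MulAut.conj (s i) (MulAut.conj (s i) t) = t := by
  simp [mul_assoc]

lemma alternatingWord_two_mul_succ (i j : A) (p : ℕ) :
    alternatingWord i j (2 * (p + 1)) = i :: j :: alternatingWord i j (2 * p) := by
  rw [show 2 * (p + 1) = 2 * p + 1 + 1 by ring, alternatingWord_succ', alternatingWord_succ']
  simp

lemma leftInvSeq_alternatingWord (i j : A) (p : ℕ) :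
    lis (alternatingWord j i (2 * p)) = (List.range (2 * p)).map fun k ↦ s j * (s i * s j) ^ k := by
  refine List.ext_getElem (by simp) fun k hk _ ↦ ?_
  rw [getElem_leftInvSeq_alternatingWord _ _ _ _ _ (by simpa using hk),
    prod_alternatingWord_eq_mul_pow]
  simp [show (2 * k + 1) / 2 = k by omega]

section SignedConj

variable [DecidableEq W]

-- Tits' representation lives on reflections × {±1}; acting on all of `W × ℤˣ` avoids a
-- subtype, and only the pairs with a reflection in the first slot carry information.
def signedConj (i : A) : Equiv.Perm (W × ℤˣ) :=
  Function.Involutive.toPerm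
    (fun p ↦ (MulAut.conj (s i) p.1, if p.1 = s i then -p.2 else p.2))
    (by
      rintro ⟨t, ε⟩
      by_cases ht : t = s i <;>
        simp [ht, mul_eq_one_iff_eq_inv, mul_assoc])

lemma signedConj_apply (i : A) (t : W) (ε : ℤˣ) :
    cs.signedConj i (t, ε) = (MulAut.conj (s i) t, if t = s i then -ε else ε) :=
  rfl

def signedConjWord (ω : List A) : Equiv.Perm (W × ℤˣ) :=
  (ω.reverse.map cs.signedConj).prod

lemma signedConjWord_cons (i : A) (ω : List A) :
    cs.signedConjWord (i :: ω) = cs.signedConjWord ω * cs.signedConj i := by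
  simp [signedConjWord]

lemma signedConjWord_apply (ω : List A) (t : W) (ε : ℤˣ) :
    cs.signedConjWord ω (t, ε) = ((π ω)⁻¹ * t * π ω, ε * (-1) ^ (lis ω).count t) := by
  induction ω generalizing t ε with
  | nil => simp [signedConjWord]
  | cons i ω ih =>
    have hcount : ((lis ω).map (MulAut.conj (s i))).count t
        = (lis ω).count (MulAut.conj (s i) t) := by
      have := (lis ω).count_map_of_injective _ (MulAut.conj (s i)).injective
        (MulAut.conj (s i) t)
      rwa [conj_simple_conj_simple] at this
    rw [signedConjWord_cons, Equiv.Perm.mul_apply, signedConj_apply, ih, leftInvSeq,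
      List.count_cons, hcount, wordProd_cons]
    by_cases ht : t = s i
    · simp [ht, pow_succ, mul_assoc]
    · simp [ht, Ne.symm ht, mul_assoc]

lemma signedConjWord_alternatingWord (i j : A) (p : ℕ) :
    cs.signedConjWord (alternatingWord j i (2 * p)) = (cs.signedConj i * cs.signedConj j) ^ p := by
  induction p with
  | zero => simp [signedConjWord, alternatingWord]
  | succ p ih =>
    rw [alternatingWord_two_mul_succ, signedConjWord_cons, signedConjWord_cons, ih, pow_succ,
      mul_assoc]

-- The left inversion sequence of the braid word runs twice through the same `M i j`
-- reflections, so every sign is flipped an even number of times.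
lemma isLiftable_signedConj : M.IsLiftable cs.signedConj := by
  intro i j
  have hper (k : ℕ) : s j * (s i * s j) ^ (M i j + k) = s j * (s i * s j) ^ k := by
    simp [pow_add, simple_mul_simple_pow]
  have hprod : π (alternatingWord j i (2 * M i j)) = 1 := by
    simp [prod_alternatingWord_eq_mul_pow, M.symmetric i j, simple_mul_simple_pow]
  ext ⟨t, ε⟩ : 1
  rw [← signedConjWord_alternatingWord, signedConjWord_apply, leftInvSeq_alternatingWord,
    hprod, two_mul, List.range_add, List.map_append, List.map_map]
  simp [Function.comp_def, hper, ← two_mul, pow_mul]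

def signedConjHom : W →* Equiv.Perm (W × ℤˣ) :=
  cs.lift ⟨cs.signedConj, cs.isLiftable_signedConj⟩

lemma signedConjHom_wordProd_inv (ω : List A) :
    cs.signedConjHom (π ω)⁻¹ = cs.signedConjWord ω := by
  induction ω with
  | nil => simp [signedConjWord]
  | cons i ω ih =>
    rw [wordProd_cons, mul_inv_rev, inv_simple, map_mul, ih, signedConjHom, lift_apply_simple,
      signedConjWord_cons]

def inversionSign (w t : W) : ℤˣ :=
  (cs.signedConjHom w⁻¹ (t, 1)).2

lemma inversionSign_wordProd (ω : List A) (t : W) :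
    cs.inversionSign (π ω) t = (-1) ^ (lis ω).count t := by
  simp [inversionSign, signedConjHom_wordProd_inv, signedConjWord_apply]

lemma signedConjHom_inv_apply (w t : W) (ε : ℤˣ) :
    cs.signedConjHom w⁻¹ (t, ε) = (w⁻¹ * t * w, ε * cs.inversionSign w t) := by
  obtain ⟨ω, -, rfl⟩ := cs.exists_isReduced w
  simp [inversionSign_wordProd, signedConjHom_wordProd_inv, signedConjWord_apply]

lemma inversionSign_mul (u v t : W) :
    cs.inversionSign (u * v) t = cs.inversionSign u t * cs.inversionSign v (u⁻¹ * t * u) := by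
  have h := congrArg (fun f : Equiv.Perm (W × ℤˣ) ↦ (f (t, 1)).2)
    (map_mul cs.signedConjHom v⁻¹ u⁻¹)
  simp only [Equiv.Perm.mul_apply, ← mul_inv_rev, signedConjHom_inv_apply] at h
  simpa [mul_assoc] using h

lemma inversionSign_one (t : W) : cs.inversionSign 1 t = 1 := by
  simpa using cs.inversionSign_wordProd [] t

lemma inversionSign_inv (w t : W) : cs.inversionSign w⁻¹ (w⁻¹ * t * w) = cs.inversionSign w t := by
  have h := cs.inversionSign_mul w w⁻¹ t
  rw [mul_inv_cancel, inversionSign_one, eq_comm, ← eq_inv_mul_iff_mul_eq, mul_one] at h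
  rw [h, Int.units_inv_eq_self]

lemma inversionSign_self {t : W} (ht : cs.IsReflection t) : cs.inversionSign t t = -1 := by
  obtain ⟨v, i, rfl⟩ := ht
  have hconj : v⁻¹ * (v * s i * v⁻¹) * v = s i := by group
  have hsimple : cs.inversionSign (s i) (s i) = -1 := by
    simpa using cs.inversionSign_wordProd [i] (s i)
  have h₁ := cs.inversionSign_mul v (s i * v⁻¹) (v * s i * v⁻¹)
  have h₂ := cs.inversionSign_mul (s i) v⁻¹ (s i)
  have h₃ := cs.inversionSign_inv v (v * s i * v⁻¹)
  rw [hconj, ← mul_assoc] at h₁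
  rw [hconj] at h₃
  rw [inv_simple, simple_mul_simple_self, one_mul, hsimple] at h₂
  rw [h₁, h₂, h₃]
  rcases Int.units_eq_one_or (cs.inversionSign v (v * s i * v⁻¹)) with h | h <;> simp [h]

lemma isLeftInversion_of_inversionSign_eq_neg_one {w t : W} (h : cs.inversionSign w t = -1) :
    cs.IsLeftInversion w t := by
  obtain ⟨ω, hω, rfl⟩ := cs.exists_isReduced w
  refine cs.isLeftInversion_of_mem_leftInvSeq hω ?_
  by_contra hmem
  rw [inversionSign_wordProd, List.count_eq_zero_of_not_mem hmem, pow_zero] at h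
  exact absurd h (by decide)

theorem inversionSign_eq_neg_one_iff {w t : W} :
    cs.inversionSign w t = -1 ↔ cs.IsLeftInversion w t := by
  refine ⟨cs.isLeftInversion_of_inversionSign_eq_neg_one, fun ⟨ht, hlt⟩ ↦ ?_⟩
  by_contra hne
  have hw : t * (t * w) = w := by rw [← mul_assoc, ht.mul_self, one_mul]
  have h := cs.inversionSign_mul t (t * w) t
  rw [hw, inversionSign_self cs ht, inv_mul_cancel, one_mul,
    (Int.units_eq_one_or _).resolve_right hne] at h
  have h' : cs.inversionSign (t * w) t = -1 := by
    rcases Int.units_eq_one_or (cs.inversionSign (t * w) t) with h'' | h''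
    · rw [h''] at h
      exact absurd h (by decide)
    · exact h''
  have := (cs.isLeftInversion_of_inversionSign_eq_neg_one h').2
  rw [hw] at this
  exact lt_asymm hlt this

end SignedConj

theorem isLeftInversion_mul_iff {u v t : W} :
    cs.IsLeftInversion (u * v) t ↔
      Xor (cs.IsLeftInversion u t) (cs.IsLeftInversion v (u⁻¹ * t * u)) := by
  classical
  simp only [← inversionSign_eq_neg_one_iff, inversionSign_mul]
  rcases Int.units_eq_one_or (cs.inversionSign u t) with h | h <;>
  rcases Int.units_eq_one_or (cs.inversionSign v (u⁻¹ * t * u)) with h' | h' <;>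
  simp [h, h', Xor]

theorem length_eq_encard_isLeftInversion (w : W) :
    (ℓ w : ℕ∞) = {t | cs.IsLeftInversion w t}.encard := by
  classical
  obtain ⟨ω, hω, rfl⟩ := cs.exists_isReduced w
  have hset : {t | cs.IsLeftInversion (π ω) t} = ((lis ω).toFinset : Set W) := by
    ext t
    simp only [Set.mem_ofPred_eq, List.coe_toFinset]
    refine ⟨fun ht ↦ ?_, cs.isLeftInversion_of_mem_leftInvSeq hω⟩
    rw [← inversionSign_eq_neg_one_iff, inversionSign_wordProd] at ht
    by_contra hmem
    rw [List.count_eq_zero_of_not_mem hmem, pow_zero] at ht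
    exact absurd ht (by decide)
  rw [hset, Set.encard_coe_eq_coe_finsetCard, List.toFinset_card_of_nodup hω.nodup_leftInvSeq,
    length_leftInvSeq, hω.eq]

def IsLongest (w₀ : W) : Prop :=
  ∀ w, ℓ w ≤ ℓ w₀

theorem exists_isLongest [Finite W] : ∃ w₀, cs.IsLongest w₀ :=
  haveI : Nonempty W := ⟨1⟩
  Finite.exists_max cs.length

namespace IsLongest

variable {cs} {w₀ : W} (hw₀ : cs.IsLongest w₀)
include hw₀

theorem isLeftInversion {t : W} (ht : cs.IsReflection t) : cs.IsLeftInversion w₀ t :=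
  ⟨ht, (hw₀ _).lt_of_ne (ht.length_mul_right_ne w₀)⟩

theorem length_add_length_inv_mul (u : W) : ℓ u + ℓ (u⁻¹ * w₀) = ℓ w₀ := by
  set v := u⁻¹ * w₀
  have huv : u * v = w₀ := mul_inv_cancel_left u w₀
  refine le_antisymm ?_ (huv ▸ cs.length_mul_le u v)
  have hdisj : Disjoint {t | cs.IsLeftInversion u t}
      (MulAut.conj u '' {t | cs.IsLeftInversion v t}) := by
    refine Set.disjoint_left.2 fun t htu ⟨x, hx, hxt⟩ ↦ ?_
    have hx' : u⁻¹ * t * u = x := by rw [← hxt]; simp [mul_assoc]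
    have hxor := cs.isLeftInversion_mul_iff.1 (huv ▸ hw₀.isLeftInversion htu.1)
    rw [hx'] at hxor
    rcases hxor with ⟨-, h⟩ | ⟨-, h⟩
    exacts [h hx, h htu]
  have hsub : {t | cs.IsLeftInversion u t} ∪ MulAut.conj u '' {t | cs.IsLeftInversion v t}
      ⊆ {t | cs.IsLeftInversion w₀ t} :=
    Set.union_subset (fun t ht ↦ hw₀.isLeftInversion ht.1)
      (Set.image_subset_iff.2 fun x hx ↦ hw₀.isLeftInversion (hx.1.conj u))
  have hcard := Set.encard_le_encard hsub
  rw [Set.encard_union_eq hdisj, (MulAut.conj u).injective.encard_image,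
    ← length_eq_encard_isLeftInversion, ← length_eq_encard_isLeftInversion,
    ← length_eq_encard_isLeftInversion] at hcard
  exact_mod_cast hcard

theorem length_mul_inv_add_length (v : W) : ℓ (w₀ * v⁻¹) + ℓ v = ℓ w₀ := by
  simpa using hw₀.length_add_length_inv_mul (w₀ * v⁻¹)

theorem eq_of_forall_isLeftDescent {z : W} (hz : ∀ i, cs.IsLeftDescent z i) : z = w₀ := by
  by_contra hne
  obtain ⟨i, hi⟩ := cs.exists_rightDescent_of_ne_one
    (show w₀ * z⁻¹ ≠ 1 from fun h ↦ hne (mul_inv_eq_one.1 h).symm)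
  have hle := cs.length_mul_le (w₀ * z⁻¹ * s i) (s i * z)
  rw [mul_assoc _ (s i), simple_mul_simple_cancel_left, inv_mul_cancel_right] at hle
  have hz' := hz i
  have hsum := hw₀.length_mul_inv_add_length z
  unfold IsLeftDescent at hz'
  unfold IsRightDescent at hi
  omega

theorem isJoin_range_simple : IsJoin cs (Set.range cs.simple) w₀ := by
  refine ⟨fun x _ ↦ hw₀.length_add_length_inv_mul x, fun z hz ↦ ?_⟩
  have hdesc (i : A) : cs.IsLeftDescent z i := by
    have := hz (s i) ⟨i, rfl⟩
    rw [wle, length_simple, inv_simple] at this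
    unfold IsLeftDescent
    omega
  obtain rfl := hw₀.eq_of_forall_isLeftDescent hdesc
  exact wle_refl cs z

theorem eq_univ_of_isGarsideShadow {Bs : Set W} (hBs : IsGarsideShadow cs Bs) : Bs = Set.univ := by
  obtain ⟨hsimple, hjoin, hsuffix⟩ := hBs
  have hw₀Bs : w₀ ∈ Bs :=
    hjoin _ (Set.range_subset_iff.2 hsimple) ⟨w₀, fun x _ ↦ hw₀.length_add_length_inv_mul x⟩ w₀
      hw₀.isJoin_range_simple
  exact Set.eq_univ_of_forall fun v ↦ hsuffix w₀ hw₀Bs v (hw₀.length_mul_inv_add_length v)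

theorem length_wordProd_mul_eq_iff_wle {l : List A} (hl : cs.IsReduced l) {u : W}
    (hlu : π l = w₀ * u⁻¹) (v : W) : ℓ (π l * v) = l.length + ℓ v ↔ wle cs v u := by
  have h₁ := hw₀.length_mul_inv_add_length u
  have h₂ := hw₀.length_mul_inv_add_length (v⁻¹ * u)
  rw [mul_inv_rev, inv_inv, ← mul_assoc] at h₂
  rw [← hl.eq, hlu, wle]
  omega

theorem exists_word_not_iff {u v : W} (h : ¬ wle cs v u) :
    ∃ l : List A, ¬ (ℓ (π l * u) = l.length + ℓ u ↔ ℓ (π l * v) = l.length + ℓ v) := by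
  obtain ⟨l, hl, hlu⟩ := cs.exists_isReduced (w₀ * u⁻¹)
  refine ⟨l, fun hiff ↦ h ?_⟩
  rw [← hw₀.length_wordProd_mul_eq_iff_wle hl hlu.symm]
  exact hiff.1 ((hw₀.length_wordProd_mul_eq_iff_wle hl hlu.symm u).2 (wle_refl cs u))

end IsLongest

end CoxeterSystem

/-- If `W` is finite, then `W` itself is the smallest Garside shadow (every
Garside shadow is all of `W`), and the automaton `A_W` is minimal: any two
distinct states `u ≠ v` are non-equivalent, i.e. some word `s_k ⋯ s_1` is
reduced when appended to exactly one of `u`, `v`. -/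
theorem stmt_19 (cs : CoxeterSystem M W) [Finite W] :
    (∀ Bs : Set W, IsGarsideShadow cs Bs → Bs = Set.univ) ∧
    (∀ u v : W, u ≠ v → ∃ l : List A,
      ¬ ((cs.length (cs.wordProd l * u) = l.length + cs.length u) ↔
         (cs.length (cs.wordProd l * v) = l.length + cs.length v))) := by
  obtain ⟨w₀, hw₀⟩ := cs.exists_isLongest
  refine ⟨fun Bs hBs ↦ hw₀.eq_univ_of_isGarsideShadow hBs, fun u v huv ↦ ?_⟩
  by_cases hvu : wle cs v u
  · obtain ⟨l, hl⟩ := hw₀.exists_word_not_iff fun huv' ↦ huv (wle_antisymm huv' hvu)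
    exact ⟨l, fun h ↦ hl h.symm⟩
  · exact hw₀.exists_word_not_iff hvu
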